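/- arXiv:1709.07743 — 4 statements merged into one kernel-verified Lean document; each statement's English description precedes it below -/
import Mathlib

section
/- Fix M_T ∈ ℕ, Δt > 0, N ∈ ℕ, nonempty sets 𝒜, ℬ, and a constant A ≥ 0. For each n ∈ {1,…,M_T}, j̄ ∈ ℤ^N, (α,β) ∈ 𝒜×ℬ, let a^{n,n}_{j̄,j}(α,β) ≥ 0 for j ∈ ℤ^N∖{0} and a^{n,n−1}_{j̄,j}(α,β) ≥ 0 for j ∈ ℤ^N be given with: (i) (a^{n,n}_{j̄,j}(α,β))_{j≠0} summable with Σ_{j≠0} a^{n,n}_{j̄,j}(α,β) ≤ A; (ii) Σ_{j∈ℤ^N} a^{n,n−1}_{j̄,j}(α,β) ≤ 1; set a^{n,n}_{j̄,0}(α,β) := 1 + Σ_{j≠0} a^{n,n}_{j̄,j}(α,β). Let f^n_{j̄}(α,β) be uniformly bounded. Suppose U, V : {0,…,M_T} × ℤ^N → ℝ are bounded, U⁰_{j̄} ≤ V⁰_{j̄} for all j̄, and for every n ≥ 1 and j̄: inf_{α∈𝒜} sup_{β∈ℬ} { a^{n,n}_{j̄,0}(α,β) Uⁿ_{j̄} −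 Σ_{j≠0} a^{n,n}_{j̄,j}(α,β) Uⁿ_{j̄+j} − Σ_{j} a^{n,n−1}_{j̄,j}(α,β) U^{n−1}_{j̄+j} − Δt f^n_{j̄}(α,β) } ≤ 0, while the corresponding expression with U replaced by V is ≥ 0. Then Uⁿ_{j̄} ≤ Vⁿ_{j̄} for all n ∈ {0,…,M_T} and j̄ ∈ ℤ^N. -/
/-!
Induction on the time level reduces the claim to one implicit step with ordered data
`Uⁿ⁻¹ ≤ Vⁿ⁻¹`. Let `m = sup (Uⁿ - Vⁿ)` and `δ > 0`. At a point `j̄` where `Uⁿ - Vⁿ > m - δ`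
pick controls `(α, β)` at which the sub- and supersolution inequalities hold up to `δ`
(boundedness of all data makes the inf-sup nearly attained). Subtracting, the source terms
cancel, and since the off-diagonal coefficients are nonnegative, with `S = ∑_{j≠0} a_j ≤ A`,
`(1 + S)(m - δ) - S m < δ`. Hence `m ≤ (2 + A) δ` for every `δ > 0`, so `m ≤ 0`.
-/

section WeightedSums

variable {ι : Type*} {a g : ι → ℝ} {R : ℝ}

lemma summable_mul_of_abs_le (ha : ∀ i, 0 ≤ a i) (hs : Summable a) (hg : ∀ i, |g i| ≤ R) :
    Summable fun i => a i * g i :=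
  (hs.mul_right R).of_norm_bounded fun i => by
    rw [Real.norm_eq_abs, abs_mul, abs_of_nonneg (ha i)]
    exact mul_le_mul_of_nonneg_left (hg i) (ha i)

lemma tsum_mul_le_tsum_mul (ha : ∀ i, 0 ≤ a i) (hs : Summable a) (hg : ∀ i, |g i| ≤ R)
    {m : ℝ} (hgm : ∀ i, g i ≤ m) : ∑' i, a i * g i ≤ (∑' i, a i) * m := by
  rw [← tsum_mul_right]
  exact (summable_mul_of_abs_le ha hs hg).tsum_le_tsum
    (fun i => mul_le_mul_of_nonneg_left (hgm i) (ha i)) (hs.mul_right m)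

lemma abs_tsum_mul_le (ha : ∀ i, 0 ≤ a i) (hs : Summable a) (hg : ∀ i, |g i| ≤ R) :
    |∑' i, a i * g i| ≤ (∑' i, a i) * R := by
  have upper := tsum_mul_le_tsum_mul ha hs hg fun i => (abs_le.mp (hg i)).2
  have lower := tsum_mul_le_tsum_mul (g := fun i => -g i) ha hs (by simpa using hg)
    fun i => neg_le.mp (abs_le.mp (hg i)).1
  simp only [mul_neg, tsum_neg] at lower
  exact abs_le.mpr ⟨by linarith, upper⟩

end WeightedSums

/-- The scheme at one grid point without its source term: `x = Uⁿ_{j̄}`, `u j = Uⁿ_{j̄+j}` and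
`v j = Uⁿ⁻¹_{j̄+j}`, with implicit weights `a` and explicit weights `b`. -/
noncomputable def schemeOp {ι κ : Type*} (a : ι → ℝ) (b : κ → ℝ) (x : ℝ) (u : ι → ℝ)
    (v : κ → ℝ) : ℝ :=
  (1 + ∑' i, a i) * x - ∑' i, a i * u i - ∑' k, b k * v k

section SchemeOp

variable {ι κ : Type*} {a : ι → ℝ} {b : κ → ℝ} {R : ℝ}

lemma schemeOp_sub (ha : ∀ i, 0 ≤ a i) (has : Summable a) (hb : ∀ k, 0 ≤ b k)
    (hbs : Summable b) {x x' : ℝ} {u u' : ι → ℝ} {v v' : κ → ℝ}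
    (hu : ∀ i, |u i| ≤ R) (hu' : ∀ i, |u' i| ≤ R) (hv : ∀ k, |v k| ≤ R) (hv' : ∀ k, |v' k| ≤ R) :
    schemeOp a b x u v - schemeOp a b x' u' v' = schemeOp a b (x - x') (u - u') (v - v') := by
  simp only [schemeOp, Pi.sub_apply, mul_sub]
  rw [(summable_mul_of_abs_le ha has hu).tsum_sub (summable_mul_of_abs_le ha has hu'),
    (summable_mul_of_abs_le hb hbs hv).tsum_sub (summable_mul_of_abs_le hb hbs hv')]
  ring

lemma abs_schemeOp_le (ha : ∀ i, 0 ≤ a i) (has : Summable a) (hb : ∀ k, 0 ≤ b k)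
    (hbs : Summable b) {A B : ℝ} (haA : ∑' i, a i ≤ A) (hbB : ∑' k, b k ≤ B)
    {x : ℝ} {u : ι → ℝ} {v : κ → ℝ} (hx : |x| ≤ R) (hu : ∀ i, |u i| ≤ R) (hv : ∀ k, |v k| ≤ R) :
    |schemeOp a b x u v| ≤ (1 + 2 * A + B) * R := by
  have hR : 0 ≤ R := (abs_nonneg x).trans hx
  have hS : 0 ≤ ∑' i, a i := tsum_nonneg ha
  have hx' : |(1 + ∑' i, a i) * x| ≤ (1 + ∑' i, a i) * R := by
    rw [abs_mul, abs_of_nonneg (by linarith)]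
    exact mul_le_mul_of_nonneg_left hx (by linarith)
  have hu' := abs_tsum_mul_le ha has hu
  have hv' := abs_tsum_mul_le hb hbs hv
  calc |schemeOp a b x u v|
      ≤ |(1 + ∑' i, a i) * x| + |∑' i, a i * u i| + |∑' k, b k * v k| :=
        (abs_sub _ _).trans (add_le_add_left (abs_sub _ _) _)
    _ ≤ (1 + ∑' i, a i) * R + (∑' i, a i) * R + (∑' k, b k) * R := by gcongr
    _ = (1 + 2 * ∑' i, a i + ∑' k, b k) * R := by ring
    _ ≤ (1 + 2 * A + B) * R := by gcongr

lemma schemeOp_ge (ha : ∀ i, 0 ≤ a i) (has : Summable a) (hb : ∀ k, 0 ≤ b k)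
    {y m : ℝ} {w : ι → ℝ} {z : κ → ℝ} (hw : ∀ i, |w i| ≤ R) (hwm : ∀ i, w i ≤ m)
    (hz : ∀ k, z k ≤ 0) :
    (1 + ∑' i, a i) * y - (∑' i, a i) * m ≤ schemeOp a b y w z := by
  have hwS := tsum_mul_le_tsum_mul ha has hw hwm
  have hzS : ∑' k, b k * z k ≤ 0 :=
    tsum_nonpos fun k => mul_nonpos_of_nonneg_of_nonpos (hb k) (hz k)
  unfold schemeOp
  linarith

lemma sub_mul_le_schemeOp_sub (ha : ∀ i, 0 ≤ a i) (has : Summable a) (hb : ∀ k, 0 ≤ b k)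
    (hbs : Summable b) {x x' m : ℝ} {u u' : ι → ℝ} {v v' : κ → ℝ}
    (hu : ∀ i, |u i| ≤ R) (hu' : ∀ i, |u' i| ≤ R) (hv : ∀ k, |v k| ≤ R) (hv' : ∀ k, |v' k| ≤ R)
    (huu' : ∀ i, u i - u' i ≤ m) (hvv' : ∀ k, v k ≤ v' k) :
    (1 + ∑' i, a i) * (x - x') - (∑' i, a i) * m ≤ schemeOp a b x u v - schemeOp a b x' u' v' := by
  rw [schemeOp_sub ha has hb hbs hu hu' hv hv']
  exact schemeOp_ge ha has hb (R := 2 * R)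
    (fun i => (abs_sub _ _).trans (by linarith [hu i, hu' i])) huu'
    fun k => sub_nonpos.mpr (hvv' k)

end SchemeOp

lemma exists_sub_lt_of_iInf_iSup_le {ι κ : Type*} [Nonempty ι] [Nonempty κ] {P Q : ι → κ → ℝ}
    {C ε : ℝ} (hP : ∀ i k, |P i k| ≤ C) (hQ : ∀ i k, |Q i k| ≤ C)
    (hPQ : ⨅ i, ⨆ k, P i k ≤ ⨅ i, ⨆ k, Q i k) (hε : 0 < ε) : ∃ i k, P i k - Q i k < ε := by
  have bddP : ∀ i, BddAbove (Set.range (P i)) := fun i =>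
    ⟨C, by rintro _ ⟨k, rfl⟩; exact (abs_le.mp (hP i k)).2⟩
  have bddQ : ∀ i, BddAbove (Set.range (Q i)) := fun i =>
    ⟨C, by rintro _ ⟨k, rfl⟩; exact (abs_le.mp (hQ i k)).2⟩
  have bddQ' : BddBelow (Set.range fun i => ⨆ k, Q i k) := by
    obtain ⟨k⟩ := ‹Nonempty κ›
    refine ⟨-C, ?_⟩
    rintro _ ⟨i, rfl⟩
    exact (abs_le.mp (hQ i k)).1.trans (le_ciSup (bddQ i) k)
  obtain ⟨i, hi⟩ := exists_lt_of_ciInf_lt (hPQ.trans_lt (lt_add_of_pos_right _ (half_pos hε)))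
  have hQi : ⨅ i, ⨆ k, Q i k ≤ ⨆ k, Q i k := ciInf_le bddQ' i
  obtain ⟨k, hk⟩ := exists_lt_of_lt_ciSup (sub_lt_self (⨆ k, Q i k) (half_pos hε))
  have hPi : P i k ≤ ⨆ k, P i k := le_ciSup (bddP i) k
  exact ⟨i, k, by linarith⟩

theorem le_of_scheme_subsolution_of_supersolution {X ι κ 𝒜 ℬ : Type*} [Nonempty 𝒜] [Nonempty ℬ]
    (a : X → 𝒜 → ℬ → ι → ℝ) (b : X → 𝒜 → ℬ → κ → ℝ) (p : X → ι → X) (q : X → κ → X)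
    (g : X → 𝒜 → ℬ → ℝ) {u v u₀ v₀ : X → ℝ} {A B F R : ℝ} (hA : 0 ≤ A)
    (ha : ∀ x α β i, 0 ≤ a x α β i) (has : ∀ x α β, Summable (a x α β))
    (haA : ∀ x α β, ∑' i, a x α β i ≤ A)
    (hb : ∀ x α β k, 0 ≤ b x α β k) (hbs : ∀ x α β, Summable (b x α β))
    (hbB : ∀ x α β, ∑' k, b x α β k ≤ B) (hg : ∀ x α β, |g x α β| ≤ F)
    (hu : ∀ x, |u x| ≤ R) (hv : ∀ x, |v x| ≤ R) (hu₀ : ∀ x, |u₀ x| ≤ R) (hv₀ : ∀ x, |v₀ x| ≤ R)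
    (h₀ : ∀ x, u₀ x ≤ v₀ x)
    (hsub : ∀ x, ⨅ α, ⨆ β,
      (schemeOp (a x α β) (b x α β) (u x) (u ∘ p x) (u₀ ∘ q x) - g x α β) ≤ 0)
    (hsup : ∀ x, 0 ≤ ⨅ α, ⨆ β,
      (schemeOp (a x α β) (b x α β) (v x) (v ∘ p x) (v₀ ∘ q x) - g x α β)) :
    ∀ x, u x ≤ v x := by
  intro x₀
  have : Nonempty X := ⟨x₀⟩
  have hle : ∀ x, u x - v x ≤ ⨆ x, (u x - v x) := le_ciSup ⟨2 * R, by
    rintro _ ⟨x, rfl⟩; linarith [(abs_le.mp (hu x)).2, (abs_le.mp (hv x)).1]⟩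
  set m := ⨆ x, (u x - v x)
  have hbound : ∀ (y y₀ : X → ℝ), (∀ x, |y x| ≤ R) → (∀ x, |y₀ x| ≤ R) → ∀ x α β,
      |schemeOp (a x α β) (b x α β) (y x) (y ∘ p x) (y₀ ∘ q x) - g x α β| ≤
        (1 + 2 * A + B) * R + F := fun y y₀ hy hy₀ x α β =>
    (abs_sub _ _).trans <| add_le_add (abs_schemeOp_le (ha x α β) (has x α β) (hb x α β)
      (hbs x α β) (haA x α β) (hbB x α β) (hy x) (fun i => hy (p x i)) fun k => hy₀ (q x k))
      (hg x α β)
  have hm : ∀ δ > 0, m ≤ (2 + A) * δ := by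
    intro δ hδ
    obtain ⟨x, hx⟩ := exists_lt_of_lt_ciSup (sub_lt_self m hδ)
    obtain ⟨α, β, hαβ⟩ := exists_sub_lt_of_iInf_iSup_le (hbound u u₀ hu hu₀ x)
      (hbound v v₀ hv hv₀ x) ((hsub x).trans (hsup x)) hδ
    rw [sub_sub_sub_cancel_right] at hαβ
    have hmono := sub_mul_le_schemeOp_sub (u := u ∘ p x) (u' := v ∘ p x) (v := u₀ ∘ q x)
      (v' := v₀ ∘ q x) (x := u x) (x' := v x) (ha x α β) (has x α β) (hb x α β) (hbs x α β)
      (fun i => hu (p x i)) (fun i => hv (p x i)) (fun k => hu₀ (q x k)) (fun k => hv₀ (q x k))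
      (fun i => hle (p x i)) fun k => h₀ (q x k)
    have hS : 0 ≤ ∑' i, a x α β i := tsum_nonneg (ha x α β)
    have hx' := mul_le_mul_of_nonneg_left hx.le (by linarith : 0 ≤ 1 + ∑' i, a x α β i)
    have hSA := mul_le_mul_of_nonneg_right (haA x α β) hδ.le
    linarith
  have hm0 : m ≤ 0 := le_of_forall_pos_le_add fun ε hε => by
    simpa only [zero_add, mul_div_cancel₀ ε (by positivity : 2 + A ≠ 0)]
      using hm (ε / (2 + A)) (by positivity)
  linarith [hle x₀]

open MeasureTheory

theorem scheme_comparison_principle_general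
    (MT N : ℕ) (Δt : ℝ)
    (𝒜 ℬ : Type) [Nonempty 𝒜] [Nonempty ℬ] (A : ℝ) (hA : 0 ≤ A)
    (ann anm : ℕ → (Fin N → ℤ) → (Fin N → ℤ) → 𝒜 → ℬ → ℝ)
    (f : ℕ → (Fin N → ℤ) → 𝒜 → ℬ → ℝ)
    (hannpos : ∀ n, 1 ≤ n → n ≤ MT → ∀ jb j α β, j ≠ 0 → 0 ≤ ann n jb j α β)
    (hanmpos : ∀ n, 1 ≤ n → n ≤ MT → ∀ jb j α β, 0 ≤ anm n jb j α β)
    (hannsum : ∀ n, 1 ≤ n → n ≤ MT → ∀ jb α β,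
      Summable (fun j : {j : Fin N → ℤ // j ≠ 0} => ann n jb j.1 α β) ∧
      ∑' j : {j : Fin N → ℤ // j ≠ 0}, ann n jb j.1 α β ≤ A)
    (hanmsum : ∀ n, 1 ≤ n → n ≤ MT → ∀ jb α β,
      Summable (fun j : Fin N → ℤ => anm n jb j α β) ∧
      ∑' j : Fin N → ℤ, anm n jb j α β ≤ 1)
    (hf : ∃ F : ℝ, ∀ n jb α β, |f n jb α β| ≤ F)
    (U V : ℕ → (Fin N → ℤ) → ℝ)
    (hUb : ∃ R : ℝ, ∀ n jb, |U n jb| ≤ R) (hVb : ∃ R : ℝ, ∀ n jb, |V n jb| ≤ R)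
    (h0 : ∀ jb, U 0 jb ≤ V 0 jb)
    (hsub : ∀ n, 1 ≤ n → n ≤ MT → ∀ jb,
      (⨅ α : 𝒜, ⨆ β : ℬ,
        ((1 + ∑' j : {j : Fin N → ℤ // j ≠ 0}, ann n jb j.1 α β) * U n jb -
          (∑' j : {j : Fin N → ℤ // j ≠ 0}, ann n jb j.1 α β * U n (jb + j.1)) -
          (∑' j : Fin N → ℤ, anm n jb j α β * U (n - 1) (jb + j)) -
          Δt * f n jb α β)) ≤ 0)
    (hsup : ∀ n, 1 ≤ n → n ≤ MT → ∀ jb,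
      (0 : ℝ) ≤ ⨅ α : 𝒜, ⨆ β : ℬ,
        ((1 + ∑' j : {j : Fin N → ℤ // j ≠ 0}, ann n jb j.1 α β) * V n jb -
          (∑' j : {j : Fin N → ℤ // j ≠ 0}, ann n jb j.1 α β * V n (jb + j.1)) -
          (∑' j : Fin N → ℤ, anm n jb j α β * V (n - 1) (jb + j)) -
          Δt * f n jb α β)) :
    ∀ n, n ≤ MT → ∀ jb, U n jb ≤ V n jb := by
  obtain ⟨RU, hRU⟩ := hUb
  obtain ⟨RV, hRV⟩ := hVb
  obtain ⟨F, hF⟩ := hf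
  have hU : ∀ k jb, |U k jb| ≤ max RU RV := fun k jb => (hRU k jb).trans (le_max_left _ _)
  have hV : ∀ k jb, |V k jb| ≤ max RU RV := fun k jb => (hRV k jb).trans (le_max_right _ _)
  intro n
  induction n with
  | zero => exact fun _ => h0
  | succ n ih =>
    intro hn
    have hn₁ : 1 ≤ n + 1 := Nat.le_add_left 1 n
    exact le_of_scheme_subsolution_of_supersolution
      (fun jb α β (j : {j : Fin N → ℤ // j ≠ 0}) => ann (n + 1) jb j.1 α β)
      (fun jb α β j => anm (n + 1) jb j α β) (fun jb j => jb + j.1) (fun jb j => jb + j)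
      (fun jb α β => Δt * f (n + 1) jb α β) hA
      (fun jb α β j => hannpos _ hn₁ hn jb j.1 α β j.2)
      (fun jb α β => (hannsum _ hn₁ hn jb α β).1) (fun jb α β => (hannsum _ hn₁ hn jb α β).2)
      (fun jb α β j => hanmpos _ hn₁ hn jb j α β)
      (fun jb α β => (hanmsum _ hn₁ hn jb α β).1) (fun jb α β => (hanmsum _ hn₁ hn jb α β).2)
      (fun jb α β => (abs_mul _ _).trans_le
        (mul_le_mul_of_nonneg_left (hF _ jb α β) (abs_nonneg Δt)))
      (hU _) (hV _) (hU n) (hV n) (ih (Nat.le_of_succ_le hn)) (hsub _ hn₁ hn) (hsup _ hn₁ hn)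

/-- comparison principle for the implicit-explicit
difference-quadrature scheme with nonnegative coefficients. -/
theorem scheme_comparison_principle
    (MT N : ℕ) (Δt : ℝ) (hΔt : 0 < Δt)
    (𝒜 ℬ : Type) [Nonempty 𝒜] [Nonempty ℬ] (A : ℝ) (hA : 0 ≤ A)
    (ann anm : ℕ → (Fin N → ℤ) → (Fin N → ℤ) → 𝒜 → ℬ → ℝ)
    (f : ℕ → (Fin N → ℤ) → 𝒜 → ℬ → ℝ)
    (hannpos : ∀ n, 1 ≤ n → n ≤ MT → ∀ jb j α β, j ≠ 0 → 0 ≤ ann n jb j α β)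
    (hanmpos : ∀ n, 1 ≤ n → n ≤ MT → ∀ jb j α β, 0 ≤ anm n jb j α β)
    (hannsum : ∀ n, 1 ≤ n → n ≤ MT → ∀ jb α β,
      Summable (fun j : {j : Fin N → ℤ // j ≠ 0} => ann n jb j.1 α β) ∧
      ∑' j : {j : Fin N → ℤ // j ≠ 0}, ann n jb j.1 α β ≤ A)
    (hanmsum : ∀ n, 1 ≤ n → n ≤ MT → ∀ jb α β,
      Summable (fun j : Fin N → ℤ => anm n jb j α β) ∧
      ∑' j : Fin N → ℤ, anm n jb j α β ≤ 1)
    (hf : ∃ F : ℝ, ∀ n jb α β, |f n jb α β| ≤ F)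
    (U V : ℕ → (Fin N → ℤ) → ℝ)
    (hUb : ∃ R : ℝ, ∀ n jb, |U n jb| ≤ R) (hVb : ∃ R : ℝ, ∀ n jb, |V n jb| ≤ R)
    (h0 : ∀ jb, U 0 jb ≤ V 0 jb)
    (hsub : ∀ n, 1 ≤ n → n ≤ MT → ∀ jb,
      (⨅ α : 𝒜, ⨆ β : ℬ,
        ((1 + ∑' j : {j : Fin N → ℤ // j ≠ 0}, ann n jb j.1 α β) * U n jb -
          (∑' j : {j : Fin N → ℤ // j ≠ 0}, ann n jb j.1 α β * U n (jb + j.1)) -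
          (∑' j : Fin N → ℤ, anm n jb j α β * U (n - 1) (jb + j)) -
          Δt * f n jb α β)) ≤ 0)
    (hsup : ∀ n, 1 ≤ n → n ≤ MT → ∀ jb,
      (0 : ℝ) ≤ ⨅ α : 𝒜, ⨆ β : ℬ,
        ((1 + ∑' j : {j : Fin N → ℤ // j ≠ 0}, ann n jb j.1 α β) * V n jb -
          (∑' j : {j : Fin N → ℤ // j ≠ 0}, ann n jb j.1 α β * V n (jb + j.1)) -
          (∑' j : Fin N → ℤ, anm n jb j α β * V (n - 1) (jb + j)) -
          Δt * f n jb α β)) :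
    ∀ n, n ≤ MT → ∀ jb, U n jb ≤ V n jb :=
  scheme_comparison_principle_general MT N Δt 𝒜 ℬ A hA ann anm f hannpos hanmpos hannsum hanmsum hf
    U V hUb hVb h0 hsub hsup
end

section
/- Fix M_T ∈ ℕ, Δt > 0, N ∈ ℕ, nonempty sets 𝒜, ℬ, and a constant A ≥ 0, and let the coefficients a^{n,n}_{j̄,j}(α,β) ≥ 0 (j ≠ 0), a^{n,n−1}_{j̄,j}(α,β) ≥ 0 with Σ_{j≠0} a^{n,n}_{j̄,j} ≤ A, Σ_j a^{n,n−1}_{j̄,j} ≤ 1 and a^{n,n}_{j̄,0} := 1 + Σ_{j≠0} a^{n,n}_{j̄,j} be given, together with uniformly bounded f^n_{j̄}(α,β). If U : {0,…,M_T} × ℤ^N → ℝ is a bounded solution of the scheme inf_{α} sup_{β} { a^{n,n}_{j̄,0} Uⁿ_{j̄} − Σ_{j≠0} a^{n,n}_{j̄,j} Uⁿ_{j̄+j} − Σ_j a^{n,n−1}_{j̄,j} U^{n−1}_{j̄+j} − Δt f^n_{j̄} } = 0 for all n ≥ 1 and j̄, then for every n, sup_{j̄} |Uⁿ_{j̄}|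 ≤ sup_{j̄} |U⁰_{j̄}| + n Δt · sup_{m,j̄,α,β} |f^m_{j̄}(α,β)|. -/
/-!
At each level the scheme satisfies a discrete maximum principle. If `c` bounds `Uⁿ` from above,
nonnegativity of the implicit weights gives
`Σ_{j≠0} a^{n,n}_{j̄,j} Uⁿ_{j̄+j} ≤ (Σ_{j≠0} a^{n,n}_{j̄,j}) c`, and the CFL condition bounds the explicit part by `sup |U^{n-1}|`. Hence the residual at every
`(α, β)`, and so its `inf sup`, which is `0`, is at least
`Uⁿ_{j̄} - A (c - Uⁿ_{j̄}) - sup |U^{n-1}| - Δt sup |f|`. Taking `c = sup Uⁿ` and then the supremum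
over `j̄` gives `sup Uⁿ ≤ sup |U^{n-1}| + Δt sup |f|`. The residual is odd in `(U, f)`, which gives
the bound from below in the same way; induction on `n` concludes.
-/

open Set

structure BoundedWeights {κ : Type*} (a : κ → ℝ) (A : ℝ) : Prop where
  nonneg : ∀ j, 0 ≤ a j
  summable : Summable a
  tsum_le : ∑' j, a j ≤ A

theorem summable_mul_of_abs_le_s10 {κ : Type*} {a v : κ → ℝ} {R : ℝ} (ha : ∀ j, 0 ≤ a j)
    (has : Summable a) (hv : ∀ j, |v j| ≤ R) : Summable fun j => a j * v j :=
  (has.mul_right R).of_norm_bounded fun j => by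
    rw [Real.norm_eq_abs, abs_mul, abs_of_nonneg (ha j)]
    exact mul_le_mul_of_nonneg_left (hv j) (ha j)

theorem tsum_mul_le_tsum_mul_of_le {κ : Type*} {a v : κ → ℝ} {R c : ℝ} (ha : ∀ j, 0 ≤ a j)
    (has : Summable a) (hv : ∀ j, |v j| ≤ R) (hc : ∀ j, v j ≤ c) :
    ∑' j, a j * v j ≤ (∑' j, a j) * c := by
  rw [← tsum_mul_right]
  exact (summable_mul_of_abs_le_s10 ha has hv).tsum_le_tsum
    (fun j => mul_le_mul_of_nonneg_left (hc j) (ha j)) (has.mul_right c)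

/-- The scheme at one grid point and one control pair: `a`, `v` are the implicit weights and
neighbouring values, `b`, `w` the explicit ones, and `g = Δt f`. -/
noncomputable def schemeResidual {κ κ' : Type*} (a : κ → ℝ) (b : κ' → ℝ) (u₀ : ℝ) (v : κ → ℝ)
    (w : κ' → ℝ) (g : ℝ) : ℝ :=
  (1 + ∑' j, a j) * u₀ - ∑' j, a j * v j - ∑' j, b j * w j - g

section Residual

variable {κ κ' : Type*} {a v : κ → ℝ} {b w : κ' → ℝ} {A B R c u₀ g : ℝ}

theorem schemeResidual_neg :
    schemeResidual a b (-u₀) (fun j => -v j) (fun j => -w j) (-g) =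
      -schemeResidual a b u₀ v w g := by
  simp only [schemeResidual, mul_neg, tsum_neg]
  ring

theorem schemeResidual_ge (ha : BoundedWeights a A) (hb : BoundedWeights b 1) (hB : 0 ≤ B)
    (hw : ∀ j, |w j| ≤ B) (hv : ∀ j, |v j| ≤ R) (hvc : ∀ j, v j ≤ c) (hu : u₀ ≤ c) :
    u₀ - A * (c - u₀) - B - g ≤ schemeResidual a b u₀ v w g := by
  have hP := tsum_mul_le_tsum_mul_of_le ha.nonneg ha.summable hv hvc
  have hQ : ∑' j, b j * w j ≤ B :=
    (tsum_mul_le_tsum_mul_of_le hb.nonneg hb.summable hw fun j => (abs_le.1 (hw j)).2).trans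
      (mul_le_of_le_one_left hB hb.tsum_le)
  have hmass := mul_le_mul_of_nonneg_right ha.tsum_le (sub_nonneg.2 hu)
  unfold schemeResidual
  linarith

theorem schemeResidual_le (ha : BoundedWeights a A) (hb : BoundedWeights b 1) (hB : 0 ≤ B)
    (hw : ∀ j, |w j| ≤ B) (hv : ∀ j, |v j| ≤ R) (hvc : ∀ j, c ≤ v j) (hu : c ≤ u₀) :
    schemeResidual a b u₀ v w g ≤ u₀ + A * (u₀ - c) + B - g := by
  have := schemeResidual_ge (c := -c) (u₀ := -u₀) (g := -g) ha hb hB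
    (fun j => (abs_neg (w j)).trans_le (hw j)) (fun j => (abs_neg (v j)).trans_le (hv j))
    (fun j => neg_le_neg (hvc j)) (neg_le_neg hu)
  rw [schemeResidual_neg] at this
  linarith

theorem abs_schemeResidual_le (hA : 0 ≤ A) (ha : BoundedWeights a A) (hb : BoundedWeights b 1)
    (hB : 0 ≤ B) (hw : ∀ j, |w j| ≤ B) (hv : ∀ j, |v j| ≤ R) (hu : |u₀| ≤ R) :
    |schemeResidual a b u₀ v w g| ≤ (1 + 2 * A) * R + B + |g| := by
  obtain ⟨hu₁, hu₂⟩ := abs_le.1 hu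
  have hge := schemeResidual_ge (g := g) ha hb hB hw hv (fun j => (abs_le.1 (hv j)).2) hu₂
  have hle := schemeResidual_le (g := g) ha hb hB hw hv (fun j => (abs_le.1 (hv j)).1) hu₁
  have h₁ := mul_le_mul_of_nonneg_left (show R - u₀ ≤ 2 * R by linarith) hA
  have h₂ := mul_le_mul_of_nonneg_left (show u₀ + R ≤ 2 * R by linarith) hA
  rw [abs_le]
  constructor <;> linarith [neg_abs_le g, le_abs_self g]

end Residual

section InfSup

variable {𝒜 ℬ : Type*} [Nonempty 𝒜] [Nonempty ℬ] {E : 𝒜 → ℬ → ℝ} {C c : ℝ}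

theorem bddAbove_range_of_abs_le {ι : Type*} {u : ι → ℝ} {R : ℝ} (hu : ∀ i, |u i| ≤ R) :
    BddAbove (range u) :=
  ⟨R, by rintro _ ⟨i, rfl⟩; exact (abs_le.1 (hu i)).2⟩

theorem le_iInf_iSup_of_forall_le (hE : ∀ α β, |E α β| ≤ C) (h : ∀ α β, c ≤ E α β) :
    c ≤ ⨅ α, ⨆ β, E α β :=
  le_ciInf fun α =>
    le_ciSup_of_le (bddAbove_range_of_abs_le (hE α)) (Classical.arbitrary ℬ) (h α _)

theorem iInf_iSup_le_of_forall_le (hE : ∀ α β, |E α β| ≤ C) (h : ∀ α β, E α β ≤ c) :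
    ⨅ α, ⨆ β, E α β ≤ c := by
  have hbdd : BddBelow (range fun α => ⨆ β, E α β) := by
    refine ⟨-C, ?_⟩
    rintro _ ⟨α, rfl⟩
    exact le_ciSup_of_le (bddAbove_range_of_abs_le (hE α)) (Classical.arbitrary ℬ)
      (neg_le_of_abs_le (hE α _))
  exact ciInf_le_of_le hbdd (Classical.arbitrary 𝒜) (ciSup_le fun β => h _ β)

end InfSup

theorem le_of_forall_le_add_mul_sub {ι : Type*} {u : ι → ℝ} {A K : ℝ} (hA : 0 ≤ A)
    (hu : BddAbove (range u)) (h : ∀ c, (∀ i, u i ≤ c) → ∀ i, u i ≤ K + A * (c - u i))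
    (i : ι) : u i ≤ K := by
  have : Nonempty ι := ⟨i⟩
  have hS : ∀ j, u j ≤ ⨆ j, u j := le_ciSup hu
  have hsup : ⨆ j, u j ≤ (K + A * ⨆ j, u j) / (1 + A) :=
    ciSup_le fun j => (le_div_iff₀ (by positivity)).2 (by linarith [h _ hS j])
  rw [le_div_iff₀ (by positivity)] at hsup
  linarith [hS i]

theorem abs_le_add_of_scheme_step {L 𝒜 ℬ : Type*} [Add L] [Zero L] [Nonempty 𝒜] [Nonempty ℬ]
    {A B G R : ℝ} {a b : L → L → 𝒜 → ℬ → ℝ} {g : L → 𝒜 → ℬ → ℝ} {u v : L → ℝ} (hA : 0 ≤ A)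
    (ha : ∀ x α β, BoundedWeights (fun j : {j : L // j ≠ 0} => a x j.1 α β) A)
    (hb : ∀ x α β, BoundedWeights (fun j => b x j α β) 1)
    (hg : ∀ x α β, |g x α β| ≤ G) (hu : ∀ x, |u x| ≤ R) (hv : ∀ x, |v x| ≤ B)
    (hsol : ∀ x, ⨅ α, ⨆ β, schemeResidual (fun j : {j : L // j ≠ 0} => a x j.1 α β)
      (fun j => b x j α β) (u x) (fun j => u (x + j.1)) (fun j => v (x + j)) (g x α β) = 0)
    (x : L) : |u x| ≤ B + G := by
  have hB : 0 ≤ B := (abs_nonneg _).trans (hv 0)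
  have hE : ∀ x α β, |schemeResidual (fun j : {j : L // j ≠ 0} => a x j.1 α β)
      (fun j => b x j α β) (u x) (fun j => u (x + j.1)) (fun j => v (x + j)) (g x α β)| ≤
        (1 + 2 * A) * R + B + G :=
    fun x α β => (abs_schemeResidual_le hA (ha x α β) (hb x α β) hB (fun j => hv _)
      (fun j => hu _) (hu x)).trans (by linarith [hg x α β])
  have hupper : u x ≤ B + G := by
    refine le_of_forall_le_add_mul_sub hA (bddAbove_range_of_abs_le hu) (fun c hc y => ?_) x
    have := le_iInf_iSup_of_forall_le (c := u y - A * (c - u y) - B - G) (hE y) fun α β =>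
      (schemeResidual_ge (ha y α β) (hb y α β) hB (fun j => hv _) (fun j => hu _) (fun j => hc _)
        (hc y)).trans' (by linarith [(abs_le.1 (hg y α β)).2])
    linarith [hsol y]
  have hlower : -u x ≤ B + G := by
    refine le_of_forall_le_add_mul_sub hA
      (bddAbove_range_of_abs_le fun y => (abs_neg (u y)).trans_le (hu y)) (fun c hc y => ?_) x
    have := iInf_iSup_le_of_forall_le (c := u y + A * (u y + c) + B + G) (hE y) fun α β =>
      (schemeResidual_le (c := -c) (ha y α β) (hb y α β) hB (fun j => hv _) (fun j => hu _)
        (fun j => neg_le.1 (hc _)) (neg_le.1 (hc y))).trans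
        (by linarith [(abs_le.1 (hg y α β)).1])
    linarith [hsol y]
  exact abs_le.2 ⟨by linarith, hupper⟩

/-- `L^∞`-stability of the implicit-explicit
difference-quadrature scheme with nonnegative coefficients. -/
theorem scheme_linfty_stability
    (MT N : ℕ) (Δt : ℝ) (hΔt : 0 < Δt)
    (𝒜 ℬ : Type) [Nonempty 𝒜] [Nonempty ℬ] (A : ℝ) (hA : 0 ≤ A)
    (ann anm : ℕ → (Fin N → ℤ) → (Fin N → ℤ) → 𝒜 → ℬ → ℝ)
    (f : ℕ → (Fin N → ℤ) → 𝒜 → ℬ → ℝ)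
    (hannpos : ∀ n, 1 ≤ n → n ≤ MT → ∀ jb j α β, j ≠ 0 → 0 ≤ ann n jb j α β)
    (hanmpos : ∀ n, 1 ≤ n → n ≤ MT → ∀ jb j α β, 0 ≤ anm n jb j α β)
    (hannsum : ∀ n, 1 ≤ n → n ≤ MT → ∀ jb α β,
      Summable (fun j : {j : Fin N → ℤ // j ≠ 0} => ann n jb j.1 α β) ∧
      ∑' j : {j : Fin N → ℤ // j ≠ 0}, ann n jb j.1 α β ≤ A)
    (hanmsum : ∀ n, 1 ≤ n → n ≤ MT → ∀ jb α β,
      Summable (fun j : Fin N → ℤ => anm n jb j α β) ∧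
      ∑' j : Fin N → ℤ, anm n jb j α β ≤ 1)
    (U : ℕ → (Fin N → ℤ) → ℝ) (hUb : ∃ R : ℝ, ∀ n jb, |U n jb| ≤ R)
    (hsol : ∀ n, 1 ≤ n → n ≤ MT → ∀ jb,
      (⨅ α : 𝒜, ⨆ β : ℬ,
        ((1 + ∑' j : {j : Fin N → ℤ // j ≠ 0}, ann n jb j.1 α β) * U n jb -
          (∑' j : {j : Fin N → ℤ // j ≠ 0}, ann n jb j.1 α β * U n (jb + j.1)) -
          (∑' j : Fin N → ℤ, anm n jb j α β * U (n - 1) (jb + j)) -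
          Δt * f n jb α β)) = 0) :
    ∀ B₀ F : ℝ, (∀ jb, |U 0 jb| ≤ B₀) → (∀ n jb α β, |f n jb α β| ≤ F) →
      ∀ n, n ≤ MT → ∀ jb, |U n jb| ≤ B₀ + n * Δt * F := by
  intro B₀ F hB₀ hF n hn
  obtain ⟨R, hR⟩ := hUb
  induction n with
  | zero => simpa using hB₀
  | succ m ih =>
    have h₁ : 1 ≤ m + 1 := Nat.le_add_left 1 m
    have hstep := abs_le_add_of_scheme_step (g := fun x α β => Δt * f (m + 1) x α β)
      (G := Δt * F) hA
      (fun x α β => ⟨fun j => hannpos _ h₁ hn x j.1 α β j.2, (hannsum _ h₁ hn x α β).1,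
        (hannsum _ h₁ hn x α β).2⟩)
      (fun x α β => ⟨fun j => hanmpos _ h₁ hn x j α β, (hanmsum _ h₁ hn x α β).1,
        (hanmsum _ h₁ hn x α β).2⟩)
      (fun x α β => by
        rw [abs_mul, abs_of_pos hΔt]
        exact mul_le_mul_of_nonneg_left (hF _ x α β) hΔt.le)
      (hR (m + 1)) (ih (Nat.le_of_succ_le hn)) (hsol _ h₁ hn)
    intro jb
    calc |U (m + 1) jb| ≤ B₀ + m * Δt * F + Δt * F := hstep jb
      _ = B₀ + ↑(m + 1) * Δt * F := by push_cast; ring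
end

section
/- Let N ∈ ℕ, R, L, γ, ε > 0, let G ⊆ ℝ^N be nonempty, let U : G → ℝ satisfy |U(x)| ≤ R for all x ∈ G, and let u : ℝ^N → ℝ satisfy |u(y)| ≤ R for all y and |u(y) − u(y′)| ≤ L|y−y′| for all y, y′. Define Ψ(x,y) = U(x) − u(y) − (γ/2)|x−y|² − (ε/2)(|x|² + |y|²) for (x,y) ∈ G × ℝ^N. Suppose (x₀,y₀) ∈ G × ℝ^N is a global maximum point of Ψ over G × ℝ^N and Ψ(x₀,y₀) ≥ 0. Then: (i) (γ/2)|x₀−y₀|² + (ε/2)(|x₀|² + |y₀|²) ≤ U(x₀) − u(y₀) ≤ 2R, and in particular ε(|x₀|² + |y₀|²) ≤ 4R; (ii) γ|x₀−y₀| ≤ L + √(4Rε). -/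
/-!
Comparing `Ψ(x₀, y₀) ≥ 0` with the bounds `|U|, |u| ≤ R` gives (i). For (ii), `y₀` minimises
`y ↦ u y + (γ/2)‖x₀ - y‖² + (ε/2)‖y‖²`; moving `y₀` a short distance `t` against the gradient
`w = γ (y₀ - x₀) + ε y₀` of the quadratic part lowers it by `t‖w‖² + O(t²)` while raising `u` by at
most `t L ‖w‖`, so `‖w‖ ≤ L`. Then `γ‖x₀ - y₀‖ ≤ ‖w‖ + ε‖y₀‖`, and `ε‖y₀‖ ≤ √(4Rε)` by (i).
-/

open RealInnerProductSpace

lemma nonpos_of_forall_pos_le_mul {a b : ℝ} (h : ∀ t > 0, a ≤ t * b) : a ≤ 0 := by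
  by_contra! ha
  have hb : 0 < b := by nlinarith [h 1 one_pos]
  have := h (a / (2 * b)) (by positivity)
  rw [div_mul_eq_mul_div, mul_div_mul_right a 2 hb.ne'] at this
  linarith

section InnerProductSpace

variable {E : Type*} [NormedAddCommGroup E] [InnerProductSpace ℝ E]

lemma norm_le_of_forall_nonneg_lipschitz_add_inner {v : E} {L K : ℝ} (hL : 0 ≤ L)
    (hnonneg : ∀ h : E, 0 ≤ L * ‖h‖ + ⟪v, h⟫ + K * ‖h‖ ^ 2) : ‖v‖ ≤ L := by
  have hsq : ‖v‖ ^ 2 - L * ‖v‖ ≤ 0 := by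
    refine nonpos_of_forall_pos_le_mul (b := K * ‖v‖ ^ 2) fun t ht => ?_
    have hdir := hnonneg (-(t • v))
    rw [norm_neg, norm_smul, inner_neg_right, real_inner_smul_right, real_inner_self_eq_norm_sq,
      Real.norm_of_nonneg ht.le] at hdir
    nlinarith
  rcases (norm_nonneg v).eq_or_lt with hv_zero | hv_pos
  · rw [← hv_zero]; exact hL
  · nlinarith

lemma penalty_add_eq (x y h : E) (γ ε : ℝ) :
    γ / 2 * ‖x - (y + h)‖ ^ 2 + ε / 2 * ‖y + h‖ ^ 2 =
      γ / 2 * ‖x - y‖ ^ 2 + ε / 2 * ‖y‖ ^ 2 + ⟪γ • (y - x) + ε • y, h⟫ + (γ + ε) / 2 * ‖h‖ ^ 2 := by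
  rw [show x - (y + h) = -((y - x) + h) by abel, norm_neg, norm_sub_rev x y, norm_add_sq_real,
    norm_add_sq_real, inner_add_left, real_inner_smul_left, real_inner_smul_left]
  ring

lemma norm_penalty_gradient_le {u : E → ℝ} {L γ ε : ℝ} {x y₀ : E} (hL : 0 ≤ L)
    (hu : ∀ y y', |u y - u y'| ≤ L * ‖y - y'‖)
    (hmin : ∀ y, u y₀ + γ / 2 * ‖x - y₀‖ ^ 2 + ε / 2 * ‖y₀‖ ^ 2 ≤
      u y + γ / 2 * ‖x - y‖ ^ 2 + ε / 2 * ‖y‖ ^ 2) :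
    ‖γ • (y₀ - x) + ε • y₀‖ ≤ L := by
  refine norm_le_of_forall_nonneg_lipschitz_add_inner (K := (γ + ε) / 2) hL fun h => ?_
  have hmove := hmin (y₀ + h)
  have hexpand := penalty_add_eq x y₀ h γ ε
  have hlip := (abs_le.1 (hu (y₀ + h) y₀)).2
  rw [add_sub_cancel_left] at hlip
  linarith

end InnerProductSpace

theorem doubling_maximum_point_estimates_general
    (N : ℕ) (R L γ ε : ℝ) (hL : 0 < L) (hγ : 0 < γ) (hε : 0 < ε)
    (G : Set (EuclideanSpace ℝ (Fin N)))
    (U u : EuclideanSpace ℝ (Fin N) → ℝ)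
    (hUb : ∀ x ∈ G, |U x| ≤ R) (hub : ∀ y, |u y| ≤ R)
    (hulip : ∀ y y', |u y - u y'| ≤ L * ‖y - y'‖)
    (Ψ : EuclideanSpace ℝ (Fin N) → EuclideanSpace ℝ (Fin N) → ℝ)
    (hΨ : ∀ x y, Ψ x y =
      U x - u y - γ / 2 * ‖x - y‖ ^ 2 - ε / 2 * (‖x‖ ^ 2 + ‖y‖ ^ 2))
    (x₀ y₀ : EuclideanSpace ℝ (Fin N)) (hx₀ : x₀ ∈ G)
    (hmax : ∀ x ∈ G, ∀ y, Ψ x y ≤ Ψ x₀ y₀)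
    (hpos : 0 ≤ Ψ x₀ y₀) :
    γ / 2 * ‖x₀ - y₀‖ ^ 2 + ε / 2 * (‖x₀‖ ^ 2 + ‖y₀‖ ^ 2) ≤ U x₀ - u y₀ ∧
    U x₀ - u y₀ ≤ 2 * R ∧
    ε * (‖x₀‖ ^ 2 + ‖y₀‖ ^ 2) ≤ 4 * R ∧
    γ * ‖x₀ - y₀‖ ≤ L + Real.sqrt (4 * R * ε) := by
  rw [hΨ] at hpos
  have hU := abs_le.1 (hUb x₀ hx₀)
  have hu := abs_le.1 (hub y₀)
  have hpenalty : γ / 2 * ‖x₀ - y₀‖ ^ 2 + ε / 2 * (‖x₀‖ ^ 2 + ‖y₀‖ ^ 2) ≤ U x₀ - u y₀ := by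
    linarith
  have hloc : ε * (‖x₀‖ ^ 2 + ‖y₀‖ ^ 2) ≤ 4 * R := by
    nlinarith [mul_nonneg hγ.le (sq_nonneg ‖x₀ - y₀‖)]
  refine ⟨hpenalty, by linarith, hloc, ?_⟩
  have hgrad : ‖γ • (y₀ - x₀) + ε • y₀‖ ≤ L := norm_penalty_gradient_le hL.le hulip fun y => by
    have := hmax x₀ hx₀ y
    rw [hΨ, hΨ] at this
    linarith
  have hy₀ : ε * ‖y₀‖ ≤ √(4 * R * ε) :=
    Real.le_sqrt_of_sq_le (by nlinarith [mul_le_mul_of_nonneg_left hloc hε.le, sq_nonneg (ε * ‖x₀‖)])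
  calc γ * ‖x₀ - y₀‖ = ‖γ • (y₀ - x₀) + ε • y₀ - ε • y₀‖ := by
        rw [add_sub_cancel_right, norm_smul, norm_sub_rev, Real.norm_of_nonneg hγ.le]
    _ ≤ ‖γ • (y₀ - x₀) + ε • y₀‖ + ‖ε • y₀‖ := norm_sub_le _ _
    _ ≤ L + √(4 * R * ε) := by
        rw [norm_smul, Real.norm_of_nonneg hε.le]
        exact add_le_add hgrad hy₀

/-- maximum-point estimates in the doubling-of-variables
argument with quadratic penalization and localization terms. -/
theorem doubling_maximum_point_estimates
    (N : ℕ) (R L γ ε : ℝ) (hR : 0 < R) (hL : 0 < L) (hγ : 0 < γ) (hε : 0 < ε)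
    (G : Set (EuclideanSpace ℝ (Fin N))) (hG : G.Nonempty)
    (U u : EuclideanSpace ℝ (Fin N) → ℝ)
    (hUb : ∀ x ∈ G, |U x| ≤ R) (hub : ∀ y, |u y| ≤ R)
    (hulip : ∀ y y', |u y - u y'| ≤ L * ‖y - y'‖)
    (Ψ : EuclideanSpace ℝ (Fin N) → EuclideanSpace ℝ (Fin N) → ℝ)
    (hΨ : ∀ x y, Ψ x y =
      U x - u y - γ / 2 * ‖x - y‖ ^ 2 - ε / 2 * (‖x‖ ^ 2 + ‖y‖ ^ 2))
    (x₀ y₀ : EuclideanSpace ℝ (Fin N)) (hx₀ : x₀ ∈ G)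
    (hmax : ∀ x ∈ G, ∀ y, Ψ x y ≤ Ψ x₀ y₀)
    (hpos : 0 ≤ Ψ x₀ y₀) :
    γ / 2 * ‖x₀ - y₀‖ ^ 2 + ε / 2 * (‖x₀‖ ^ 2 + ‖y₀‖ ^ 2) ≤ U x₀ - u y₀ ∧
    U x₀ - u y₀ ≤ 2 * R ∧
    ε * (‖x₀‖ ^ 2 + ‖y₀‖ ^ 2) ≤ 4 * R ∧
    γ * ‖x₀ - y₀‖ ≤ L + Real.sqrt (4 * R * ε) :=
  doubling_maximum_point_estimates_general N R L γ ε hL hγ hε G U u hUb hub hulip Ψ hΨ x₀ y₀ hx₀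
    hmax hpos
end

section
/- Let η : ℝ^M → ℝ^N be Borel measurable with |η(z)| ≤ K|z| for |z| < 1, and let ν be a nonnegative Borel measure on ℝ^M ∖ {0} which on {0 < |z| < 1} has density k with 0 ≤ k(z) ≤ C/|z|^{M+σ}, σ ∈ (0,2). For δ ∈ (0,1) define the matrix a_δ = (1/2) ∫_{0<|z|≤δ} η(z) η(z)^T ν(dz). Then there is a constant C′ > 0 depending only on M, N, σ, C and K such that for every three times continuously differentiable φ : ℝ^N → ℝ with bounded second and third derivatives and every x ∈ ℝ^N, | ∫_{0<|z|≤δ} ( φ(x+η(z)) − φ(x) − ⟨η(z), ∇φ(x)⟩ ) ν(dz) − tr( a_δ D²φ(x) ) | ≤ C′ ‖D³φ‖_∞ δ^{3−σ}. -/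
/-!
Taylor's formula with third-order remainder gives
`‖φ (x + h) - φ x - Dφ x h - ½ D²φ x h h‖ ≤ ‖D³φ‖∞ ‖h‖³`, and `½ ∫ D²φ x (η z) (η z) ν(dz)` is
exactly `tr (a_δ D²φ x)`. So the error is the integral of the remainder at `h = η z`, which is at
most `‖D³φ‖∞ K³ ∫_{0<|z|≤δ} |z|³ ν(dz)`. Comparing `ν` with the density `C |z|^{-(M+σ)}` and
integrating in polar coordinates gives `∫_{0<|z|≤δ} |z|^p ν(dz) ≤ C M |B₁| δ^{p-σ} / (p - σ)` for
every `p > σ`: `p = 3` yields the rate, `p = 2` the integrability of every term.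
-/

open MeasureTheory

/-- The covariance matrix `a_δ = (1/2) ∫_{0<|z|≤δ} η(z) η(z)^T ν(dz)`
of the small jumps. -/
noncomputable def smallJumpCov (M N : ℕ)
    (η : EuclideanSpace ℝ (Fin M) → EuclideanSpace ℝ (Fin N))
    (ν : Measure (EuclideanSpace ℝ (Fin M))) (δ : ℝ) : Matrix (Fin N) (Fin N) ℝ :=
  Matrix.of fun i j =>
    1 / 2 * ∫ z in {z : EuclideanSpace ℝ (Fin M) | 0 < ‖z‖ ∧ ‖z‖ ≤ δ},
      (η z i * η z j) ∂ν

/-- The Hessian matrix `D²φ(x)` of a real-valued function on `ℝ^N`. -/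
noncomputable def hessianMatrix (N : ℕ) (φ : EuclideanSpace ℝ (Fin N) → ℝ)
    (x : EuclideanSpace ℝ (Fin N)) : Matrix (Fin N) (Fin N) ℝ :=
  Matrix.of fun i j =>
    fderiv ℝ (fun y => fderiv ℝ φ y (EuclideanSpace.single j (1 : ℝ))) x
      (EuclideanSpace.single i (1 : ℝ))

open Metric Set Module

section Taylor

variable {E F : Type*} [NormedAddCommGroup E] [NormedSpace ℝ E]
  [NormedAddCommGroup F] [NormedSpace ℝ F]

theorem norm_sub_le_mul_pow_succ_of_norm_fderiv_le {g : E → F} {g' : E → E →L[ℝ] F}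
    {c : ℝ} {n : ℕ} {x : E} (hc : 0 ≤ c) (hg : ∀ y, HasFDerivAt g (g' y) y)
    (hg' : ∀ y, ‖g' y‖ ≤ c * ‖y - x‖ ^ n) (y : E) :
    ‖g y - g x‖ ≤ c * ‖y - x‖ ^ (n + 1) := by
  have hbound : ∀ z ∈ closedBall x ‖y - x‖, ‖g' z‖ ≤ c * ‖y - x‖ ^ n := fun z hz =>
    (hg' z).trans (by gcongr; exact mem_closedBall_iff_norm.mp hz)
  have := (convex_closedBall x ‖y - x‖).norm_image_sub_le_of_norm_hasFDerivWithin_le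
    (fun z _ => (hg z).hasFDerivWithinAt) hbound (mem_closedBall_self (norm_nonneg _))
    (y := y) (mem_closedBall.mpr (dist_eq_norm y x).le)
  rwa [mul_assoc, ← pow_succ] at this

theorem norm_fderiv_sub_sub_le {φ : E → F} (hφ : ContDiff ℝ 3 φ) {B : ℝ}
    (hB : ∀ u, ‖iteratedFDeriv ℝ 3 φ u‖ ≤ B) (x y : E) :
    ‖fderiv ℝ φ y - fderiv ℝ φ x - fderiv ℝ (fderiv ℝ φ) x (y - x)‖ ≤ B * ‖y - x‖ ^ 2 := by
  have hB0 : 0 ≤ B := (norm_nonneg _).trans (hB x)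
  have hφ2 := hφ.fderiv_right (m := 2) (by norm_num)
  have hD2 : ∀ y, ‖fderiv ℝ (fderiv ℝ φ) y - fderiv ℝ (fderiv ℝ φ) x‖ ≤ B * ‖y - x‖ := by
    have hφ3 := hφ2.fderiv_right (m := 1) (by norm_num)
    simpa using norm_sub_le_mul_pow_succ_of_norm_fderiv_le (n := 0) hB0
      (fun y => (hφ3.differentiable (by norm_num) y).hasFDerivAt) fun y => by
        rw [pow_zero, mul_one, ← norm_iteratedFDeriv_one, norm_iteratedFDeriv_fderiv,
          norm_iteratedFDeriv_fderiv]
        exact hB y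
  calc _ = ‖(fderiv ℝ φ y - fderiv ℝ (fderiv ℝ φ) x y) -
        (fderiv ℝ φ x - fderiv ℝ (fderiv ℝ φ) x x)‖ := by rw [map_sub]; abel_nf
    _ ≤ _ := norm_sub_le_mul_pow_succ_of_norm_fderiv_le (n := 1) hB0
        (g := fun y => fderiv ℝ φ y - fderiv ℝ (fderiv ℝ φ) x y)
        (fun y => ((hφ2.differentiable (by norm_num) y).hasFDerivAt).sub
          (fderiv ℝ (fderiv ℝ φ) x).hasFDerivAt) (by simpa using hD2) y

theorem ContinuousLinearMap.hasFDerivAt_half_apply_sub_sub (L : E →L[ℝ] E →L[ℝ] F)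
    (hL : ∀ v w, L v w = L w v) (x y : E) :
    HasFDerivAt (fun y => (2 : ℝ)⁻¹ • L (y - x) (y - x)) (L (y - x)) y := by
  have hsub : HasFDerivAt (fun y : E => y - x) (ContinuousLinearMap.id ℝ E) y :=
    (hasFDerivAt_id y).sub_const x
  refine (((L.hasFDerivAt.comp y hsub).clm_apply hsub).const_smul (2 : ℝ)⁻¹).congr_fderiv ?_
  ext v
  simp only [smul_apply, add_apply, ContinuousLinearMap.coe_comp, Function.comp_apply,
    ContinuousLinearMap.coe_id', id_eq, ContinuousLinearMap.flip_apply]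
  rw [hL v, ← two_smul ℝ, smul_smul, inv_mul_cancel₀ two_ne_zero, one_smul]

theorem norm_taylor_two_remainder_le {φ : E → F} (hφ : ContDiff ℝ 3 φ) {B : ℝ}
    (hB : ∀ u, ‖iteratedFDeriv ℝ 3 φ u‖ ≤ B) (x h : E) :
    ‖φ (x + h) - φ x - fderiv ℝ φ x h - (2 : ℝ)⁻¹ • fderiv ℝ (fderiv ℝ φ) x h h‖ ≤
      B * ‖h‖ ^ 3 := by
  set L := fderiv ℝ (fderiv ℝ φ) x
  have hφ1 : ∀ y, HasFDerivAt φ (fderiv ℝ φ y) y := fun y =>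
    (hφ.differentiable (by norm_num) y).hasFDerivAt
  have hL : ∀ v w, L v w = L w v := second_derivative_symmetric hφ1
    ((hφ.fderiv_right (m := 2) (by norm_num)).differentiable (by norm_num) x).hasFDerivAt
  have := norm_sub_le_mul_pow_succ_of_norm_fderiv_le (n := 2) ((norm_nonneg _).trans (hB x))
    (g := fun y => φ y - fderiv ℝ φ x y - (2 : ℝ)⁻¹ • L (y - x) (y - x))
    (fun y => ((hφ1 y).sub (fderiv ℝ φ x).hasFDerivAt).sub (L.hasFDerivAt_half_apply_sub_sub hL x y))
    (norm_fderiv_sub_sub_le hφ hB x) (x + h)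
  calc _ = ‖(φ (x + h) - fderiv ℝ φ x (x + h) - (2 : ℝ)⁻¹ • L h h) -
        (φ x - fderiv ℝ φ x x - (2 : ℝ)⁻¹ • L 0 0)‖ := by
        rw [map_add]; simp only [map_zero, smul_zero]; abel_nf
    _ ≤ _ := by simpa using this

end Taylor

section Moments

def DominatedByStableDensity {E : Type*} [NormedAddCommGroup E] [NormedSpace ℝ E]
    [MeasurableSpace E] (ν μ : Measure E) (C σ : ℝ) : Prop :=
  ∀ s, MeasurableSet s → s ⊆ {z | 0 < ‖z‖ ∧ ‖z‖ < 1} →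
    ν s ≤ ∫⁻ z in s, ENNReal.ofReal (C / ‖z‖ ^ ((finrank ℝ E : ℝ) + σ)) ∂μ

theorem DominatedByStableDensity.of_density {E : Type*} [NormedAddCommGroup E]
    [NormedSpace ℝ E] [MeasurableSpace E] {ν μ : Measure E} {C σ : ℝ} {k : E → ℝ}
    (hνk : ∀ s : Set E, MeasurableSet s → s ⊆ {z | 0 < ‖z‖ ∧ ‖z‖ < 1} →
      ν s = ∫⁻ z in s, ENNReal.ofReal (k z) ∂μ)
    (hk : ∀ z : E, 0 < ‖z‖ → ‖z‖ < 1 → k z ≤ C / ‖z‖ ^ ((finrank ℝ E : ℝ) + σ)) :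
    DominatedByStableDensity ν μ C σ := fun s hs hsU => by
  rw [hνk s hs hsU]
  exact setLIntegral_mono' hs fun z hz => ENNReal.ofReal_le_ofReal (hk z (hsU hz).1 (hsU hz).2)

variable {E : Type*} [NormedAddCommGroup E] [NormedSpace ℝ E] [FiniteDimensional ℝ E]
  [MeasurableSpace E] [BorelSpace E] (μ : Measure E) [μ.IsAddHaarMeasure]

theorem integral_closedBall_norm_rpow [Nontrivial E] {q r : ℝ} (hq : -(finrank ℝ E : ℝ) < q)
    (hr : 0 ≤ r) :
    ∫ z in closedBall (0 : E) r, ‖z‖ ^ q ∂μ =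
      finrank ℝ E * μ.real (ball 0 1) * (r ^ (q + finrank ℝ E) / (q + finrank ℝ E)) := by
  have hd : 1 ≤ finrank ℝ E := finrank_pos
  have hradial : ∀ y ∈ Ioi (0 : ℝ), y ^ (finrank ℝ E - 1) • (Iic r).indicator (· ^ q) y =
      (Iic r).indicator (· ^ (q + finrank ℝ E - 1)) y := by
    intro y (hy : 0 < y)
    by_cases hyr : y ∈ Iic r
    · rw [indicator_of_mem hyr, indicator_of_mem hyr, smul_eq_mul, ← Real.rpow_natCast,
        Nat.cast_sub hd, ← Real.rpow_add hy]
      ring_nf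
    · simp [hyr]
  calc ∫ z in closedBall (0 : E) r, ‖z‖ ^ q ∂μ
      = ∫ z, (Iic r).indicator (· ^ q) ‖z‖ ∂μ := by
        rw [← integral_indicator measurableSet_closedBall]
        congr with z
        by_cases hz : ‖z‖ ≤ r <;> simp [indicator, hz]
    _ = finrank ℝ E * μ.real (ball 0 1) *
          ∫ y in Ioi 0, (Iic r).indicator (· ^ (q + finrank ℝ E - 1)) y := by
        rw [integral_fun_norm_addHaar, setIntegral_congr_fun measurableSet_Ioi hradial,
          nsmul_eq_mul, smul_eq_mul, mul_assoc]
    _ = _ := by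
        rw [integral_indicator measurableSet_Iic, Measure.restrict_restrict measurableSet_Iic,
          Iic_inter_Ioi, ← intervalIntegral.integral_of_le hr,
          integral_rpow (Or.inl (by linarith)), Real.zero_rpow (by linarith), sub_add_cancel,
          sub_zero]

theorem integrableOn_closedBall_norm_rpow [Nontrivial E] {q : ℝ}
    (hq : -(finrank ℝ E : ℝ) < q) (r : ℝ) :
    IntegrableOn (fun z : E => ‖z‖ ^ q) (closedBall 0 r) μ :=
  (integrableOn_ball_of_norm_le_rpow (C := 1) (α := -q) (r := r + 1) finrank_pos (by linarith)
    (ae_of_all _ fun z => by simp [abs_of_nonneg, Real.rpow_nonneg])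
    (measurable_norm.pow_const q).aestronglyMeasurable).mono_set
    (closedBall_subset_ball (lt_add_one r))

theorem lintegral_norm_rpow_le_of_dominated {ν : Measure E} {C σ δ p : ℝ} (hC : 0 ≤ C)
    (hσp : σ < p) (hδ0 : 0 < δ) (hδ1 : δ < 1)
    (hν : DominatedByStableDensity ν μ C σ) :
    ∫⁻ z in {z : E | 0 < ‖z‖ ∧ ‖z‖ ≤ δ}, ENNReal.ofReal (‖z‖ ^ p) ∂ν ≤
      ENNReal.ofReal (C * finrank ℝ E * μ.real (ball 0 1) / (p - σ) * δ ^ (p - σ)) := by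
  set S := {z : E | 0 < ‖z‖ ∧ ‖z‖ ≤ δ}
  have hS : MeasurableSet S := by measurability
  rcases subsingleton_or_nontrivial E with hE | hE
  · have : S = ∅ := eq_empty_of_forall_notMem fun z hz => by simpa [Subsingleton.elim z 0] using hz.1
    simp [this]
  set w : E → ENNReal := fun z => ENNReal.ofReal (C / ‖z‖ ^ ((finrank ℝ E : ℝ) + σ))
  have hw : Measurable w := by fun_prop
  have hle : ν.restrict S ≤ (μ.restrict S).withDensity w := Measure.le_iff.mpr fun t ht => by
    rw [Measure.restrict_apply ht, withDensity_apply _ ht, Measure.restrict_restrict ht]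
    exact hν _ (ht.inter hS) (inter_subset_right.trans fun z hz => ⟨hz.1, hz.2.trans_lt hδ1⟩)
  have hq : -(finrank ℝ E : ℝ) < p - (finrank ℝ E + σ) := by linarith
  calc ∫⁻ z in S, ENNReal.ofReal (‖z‖ ^ p) ∂ν
      ≤ ∫⁻ z, ENNReal.ofReal (‖z‖ ^ p) ∂(μ.restrict S).withDensity w := lintegral_mono' hle le_rfl
    _ = ∫⁻ z in S, ENNReal.ofReal (C * ‖z‖ ^ (p - (finrank ℝ E + σ))) ∂μ := by
        rw [lintegral_withDensity_eq_lintegral_mul _ hw (by fun_prop)]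
        refine setLIntegral_congr_fun hS fun z hz => ?_
        rw [Pi.mul_apply, ← ENNReal.ofReal_mul (by positivity), Real.rpow_sub hz.1]
        ring_nf
    _ ≤ ∫⁻ z in closedBall 0 δ, ENNReal.ofReal (C * ‖z‖ ^ (p - (finrank ℝ E + σ))) ∂μ :=
        lintegral_mono_set fun z hz => mem_closedBall_zero_iff.mpr hz.2
    _ = ENNReal.ofReal (∫ z in closedBall 0 δ, C * ‖z‖ ^ (p - (finrank ℝ E + σ)) ∂μ) :=
        (ofReal_integral_eq_lintegral_ofReal
          ((integrableOn_closedBall_norm_rpow μ hq δ).const_mul C)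
          (ae_of_all _ fun z => by positivity)).symm
    _ = _ := by
        rw [integral_const_mul, integral_closedBall_norm_rpow μ hq hδ0.le]
        congr 1
        ring_nf

theorem integrableOn_of_norm_le_mul_rpow {F : Type*} [NormedAddCommGroup F] {ν : Measure E}
    {C σ δ p c : ℝ} (hC : 0 ≤ C) (hσp : σ < p) (hδ0 : 0 < δ) (hδ1 : δ < 1)
    (hν : DominatedByStableDensity ν μ C σ) {f : E → F} (hf : AEStronglyMeasurable f ν)
    (hbound : ∀ z ∈ {z : E | 0 < ‖z‖ ∧ ‖z‖ ≤ δ}, ‖f z‖ ≤ c * ‖z‖ ^ p) :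
    IntegrableOn f {z : E | 0 < ‖z‖ ∧ ‖z‖ ≤ δ} ν := by
  have hmoment : IntegrableOn (fun z : E => ‖z‖ ^ p) {z : E | 0 < ‖z‖ ∧ ‖z‖ ≤ δ} ν :=
    ⟨(measurable_norm.pow_const p).aestronglyMeasurable,
      (hasFiniteIntegral_iff_ofReal (ae_of_all _ fun z => by positivity)).mpr
        ((lintegral_norm_rpow_le_of_dominated μ hC hσp hδ0 hδ1 hν).trans_lt ENNReal.ofReal_lt_top)⟩
  exact (hmoment.const_mul c).mono' hf.restrict
    (ae_restrict_of_forall_mem (by measurability) hbound)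

theorem norm_setIntegral_le_of_norm_le_mul_rpow {F : Type*} [NormedAddCommGroup F]
    [NormedSpace ℝ F] {ν : Measure E} {C σ δ p c : ℝ} (hC : 0 ≤ C) (hσp : σ < p) (hδ0 : 0 < δ)
    (hδ1 : δ < 1) (hν : DominatedByStableDensity ν μ C σ) (hc : 0 ≤ c) {f : E → F}
    (hbound : ∀ z ∈ {z : E | 0 < ‖z‖ ∧ ‖z‖ ≤ δ}, ‖f z‖ ≤ c * ‖z‖ ^ p) :
    ‖∫ z in {z : E | 0 < ‖z‖ ∧ ‖z‖ ≤ δ}, f z ∂ν‖ ≤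
      c * (C * finrank ℝ E * μ.real (ball 0 1) / (p - σ) * δ ^ (p - σ)) := by
  have hmoment := integrableOn_of_norm_le_mul_rpow μ hC hσp hδ0 hδ1 hν (c := 1)
    (measurable_norm.pow_const p).aestronglyMeasurable fun z _ => by
      rw [one_mul, Real.norm_of_nonneg (by positivity)]
  calc ‖∫ z in {z : E | 0 < ‖z‖ ∧ ‖z‖ ≤ δ}, f z ∂ν‖
      ≤ ∫ z in {z : E | 0 < ‖z‖ ∧ ‖z‖ ≤ δ}, c * ‖z‖ ^ p ∂ν :=
        norm_integral_le_of_norm_le (hmoment.const_mul c)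
          (ae_restrict_of_forall_mem (by measurability) hbound)
    _ = c * ∫ z in {z : E | 0 < ‖z‖ ∧ ‖z‖ ≤ δ}, ‖z‖ ^ p ∂ν := integral_const_mul _ _
    _ ≤ _ := by
        gcongr
        rw [integral_eq_lintegral_of_nonneg_ae (ae_of_all _ fun z => by positivity)
          (measurable_norm.pow_const p).aestronglyMeasurable]
        exact ENNReal.toReal_le_of_le_ofReal (by positivity)
          (lintegral_norm_rpow_le_of_dominated μ hC hσp hδ0 hδ1 hν)

theorem integrableOn_bilinear_comp_of_dominated {G : Type*} [NormedAddCommGroup G]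
    [NormedSpace ℝ G] {ν : Measure E} {C σ δ K : ℝ} (hC : 0 ≤ C) (hσ : σ < 2) (hδ0 : 0 < δ)
    (hδ1 : δ < 1) (hν : DominatedByStableDensity ν μ C σ) {η : E → G}
    (hη : AEStronglyMeasurable η ν) (hηK : ∀ z ∈ {z : E | 0 < ‖z‖ ∧ ‖z‖ ≤ δ}, ‖η z‖ ≤ K * ‖z‖)
    (B : G →L[ℝ] G →L[ℝ] ℝ) :
    IntegrableOn (fun z => B (η z) (η z)) {z : E | 0 < ‖z‖ ∧ ‖z‖ ≤ δ} ν :=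
  integrableOn_of_norm_le_mul_rpow μ hC hσ hδ0 hδ1 hν (c := ‖B‖ * K ^ 2)
    (B.continuous₂.comp_aestronglyMeasurable (hη.prodMk hη)) fun z hz => by
    calc ‖B (η z) (η z)‖ ≤ ‖B‖ * ‖η z‖ * ‖η z‖ := B.le_opNorm₂ _ _
      _ ≤ ‖B‖ * (K * ‖z‖) ^ 2 := by rw [mul_assoc, ← sq]; gcongr; exact hηK z hz
      _ = _ := by rw [Real.rpow_ofNat]; ring

end Moments

section Covariance

variable {M N : ℕ}

theorem ContinuousLinearMap.apply_apply_eq_sum_single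
    (B : EuclideanSpace ℝ (Fin N) →L[ℝ] EuclideanSpace ℝ (Fin N) →L[ℝ] ℝ) (u v : EuclideanSpace ℝ (Fin N)) :
    B u v = ∑ i, ∑ j, u i * v j * B (EuclideanSpace.single i 1) (EuclideanSpace.single j 1) := by
  have hrepr : ∀ w : EuclideanSpace ℝ (Fin N), ∑ i, w i • EuclideanSpace.single i (1 : ℝ) = w :=
    fun w => by simpa using (EuclideanSpace.basisFun (Fin N) ℝ).sum_repr w
  conv_lhs => rw [← hrepr u, ← hrepr v]
  simp only [map_sum, map_smul, sum_apply, smul_apply, smul_eq_mul, Finset.mul_sum]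
  rw [Finset.sum_comm]
  refine Finset.sum_congr rfl fun i _ => Finset.sum_congr rfl fun j _ => ?_
  ring

theorem hessianMatrix_apply {φ : EuclideanSpace ℝ (Fin N) → ℝ} {x : EuclideanSpace ℝ (Fin N)}
    (hφ : DifferentiableAt ℝ (fderiv ℝ φ) x) (i j : Fin N) :
    hessianMatrix N φ x i j =
      fderiv ℝ (fderiv ℝ φ) x (EuclideanSpace.single i 1) (EuclideanSpace.single j 1) := by
  simp [hessianMatrix, fderiv_clm_apply hφ (differentiableAt_const _)]

theorem trace_smallJumpCov_mul_hessianMatrix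
    {η : EuclideanSpace ℝ (Fin M) → EuclideanSpace ℝ (Fin N)}
    {ν : Measure (EuclideanSpace ℝ (Fin M))} {δ : ℝ} {φ : EuclideanSpace ℝ (Fin N) → ℝ}
    {x : EuclideanSpace ℝ (Fin N)} (hφ : DifferentiableAt ℝ (fderiv ℝ φ) x)
    (hη : ∀ i j, IntegrableOn (fun z => η z i * η z j)
      {z : EuclideanSpace ℝ (Fin M) | 0 < ‖z‖ ∧ ‖z‖ ≤ δ} ν) :
    Matrix.trace (smallJumpCov M N η ν δ * hessianMatrix N φ x) =
      ∫ z in {z : EuclideanSpace ℝ (Fin M) | 0 < ‖z‖ ∧ ‖z‖ ≤ δ},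
        (2 : ℝ)⁻¹ * fderiv ℝ (fderiv ℝ φ) x (η z) (η z) ∂ν := by
  have hint : ∀ i j, IntegrableOn
      (fun z => (2 : ℝ)⁻¹ * (η z i * η z j) * hessianMatrix N φ x j i)
      {z : EuclideanSpace ℝ (Fin M) | 0 < ‖z‖ ∧ ‖z‖ ≤ δ} ν := fun i j =>
    ((hη i j).const_mul _).mul_const _
  calc Matrix.trace (smallJumpCov M N η ν δ * hessianMatrix N φ x)
      = ∑ i, ∑ j, ∫ z in {z : EuclideanSpace ℝ (Fin M) | 0 < ‖z‖ ∧ ‖z‖ ≤ δ},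
          (2 : ℝ)⁻¹ * (η z i * η z j) * hessianMatrix N φ x j i ∂ν := by
        simp only [Matrix.trace, Matrix.diag, Matrix.mul_apply, smallJumpCov, Matrix.of_apply,
          one_div, integral_mul_const, integral_const_mul]
    _ = ∫ z in {z : EuclideanSpace ℝ (Fin M) | 0 < ‖z‖ ∧ ‖z‖ ≤ δ},
          ∑ i, ∑ j, (2 : ℝ)⁻¹ * (η z i * η z j) * hessianMatrix N φ x j i ∂ν := by
        rw [integral_finsetSum _ fun i _ => integrable_finsetSum _ fun j _ => hint i j]
        exact Finset.sum_congr rfl fun i _ => (integral_finsetSum _ fun j _ => hint i j).symm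
    _ = _ := by
        refine integral_congr_ae (ae_of_all _ fun z => ?_)
        simp only [(fderiv ℝ (fderiv ℝ φ) x).apply_apply_eq_sum_single (η z),
          hessianMatrix_apply hφ, Finset.mul_sum]
        rw [Finset.sum_comm]
        exact Finset.sum_congr rfl fun i _ => Finset.sum_congr rfl fun j _ => by ring

end Covariance

theorem small_jump_second_order_approximation_general
    (M N : ℕ) (σ C K : ℝ) (hσ : σ ∈ Set.Ioo (0 : ℝ) 2) (hC : 0 < C) (hK : 0 < K)
    (η : EuclideanSpace ℝ (Fin M) → EuclideanSpace ℝ (Fin N)) (hη : Measurable η)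
    (hηK : ∀ z : EuclideanSpace ℝ (Fin M), ‖z‖ < 1 → ‖η z‖ ≤ K * ‖z‖)
    (ν : Measure (EuclideanSpace ℝ (Fin M)))
    (k : EuclideanSpace ℝ (Fin M) → ℝ)
    (hνk : ∀ s : Set (EuclideanSpace ℝ (Fin M)), MeasurableSet s →
      s ⊆ {z | 0 < ‖z‖ ∧ ‖z‖ < 1} → ν s = ∫⁻ z in s, ENNReal.ofReal (k z) ∂volume)
    (hk : ∀ z : EuclideanSpace ℝ (Fin M), 0 < ‖z‖ → ‖z‖ < 1 →
      0 ≤ k z ∧ k z ≤ C / ‖z‖ ^ ((M : ℝ) + σ)) :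
    ∃ C' > (0 : ℝ), ∀ δ : ℝ, 0 < δ → δ < 1 →
      ∀ φ : EuclideanSpace ℝ (Fin N) → ℝ, ContDiff ℝ 3 φ →
      ∀ B₂ B₃ : ℝ, (∀ x, ‖iteratedFDeriv ℝ 2 φ x‖ ≤ B₂) →
        (∀ x, ‖iteratedFDeriv ℝ 3 φ x‖ ≤ B₃) →
      ∀ x : EuclideanSpace ℝ (Fin N),
        |(∫ z in {z : EuclideanSpace ℝ (Fin M) | 0 < ‖z‖ ∧ ‖z‖ ≤ δ},
            (φ (x + η z) - φ x - fderiv ℝ φ x (η z)) ∂ν) -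
          Matrix.trace (smallJumpCov M N η ν δ * hessianMatrix N φ x)| ≤
        C' * B₃ * δ ^ (3 - σ) := by
  have hdom : DominatedByStableDensity ν volume C σ :=
    .of_density hνk fun z hz0 hz1 => by simpa using (hk z hz0 hz1).2
  set c₃ := C * finrank ℝ (EuclideanSpace ℝ (Fin M)) *
    volume.real (ball (0 : EuclideanSpace ℝ (Fin M)) 1) / (3 - σ)
  have hσ3 : σ < 3 := by linarith [hσ.2]
  refine ⟨K ^ 3 * c₃ + 1, by positivity, fun δ hδ0 hδ1 φ hφ _ B₃ _ hB₃ x => ?_⟩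
  set S := {z : EuclideanSpace ℝ (Fin M) | 0 < ‖z‖ ∧ ‖z‖ ≤ δ}
  set D2 := fderiv ℝ (fderiv ℝ φ) x
  have hηS : ∀ z ∈ S, ‖η z‖ ≤ K * ‖z‖ := fun z hz => hηK z (hz.2.trans_lt hδ1)
  have hB₃0 : 0 ≤ B₃ := (norm_nonneg _).trans (hB₃ x)
  have hremainder : ∀ z ∈ S, ‖φ (x + η z) - φ x - fderiv ℝ φ x (η z) - 2⁻¹ * D2 (η z) (η z)‖ ≤
      B₃ * K ^ 3 * ‖z‖ ^ (3 : ℝ) := fun z hz => by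
    calc _ ≤ B₃ * ‖η z‖ ^ 3 := by simpa using norm_taylor_two_remainder_le hφ hB₃ x (η z)
      _ ≤ B₃ * (K * ‖z‖) ^ 3 := by gcongr; exact hηS z hz
      _ = _ := by rw [Real.rpow_ofNat]; ring
  have hηη : ∀ B : EuclideanSpace ℝ (Fin N) →L[ℝ] EuclideanSpace ℝ (Fin N) →L[ℝ] ℝ,
      IntegrableOn (fun z => B (η z) (η z)) S ν :=
    integrableOn_bilinear_comp_of_dominated volume hC.le hσ.2 hδ0 hδ1 hdom
      hη.aestronglyMeasurable hηS
  have hΨ : IntegrableOn (fun z => φ (x + η z) - φ x - fderiv ℝ φ x (η z)) S ν := by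
    have hR := integrableOn_of_norm_le_mul_rpow volume hC.le hσ3 hδ0 hδ1 hdom
      (by have := hφ.continuous; fun_prop) hremainder
    simpa only [Pi.add_def, sub_add_cancel] using hR.add ((hηη D2).const_mul 2⁻¹)
  rw [trace_smallJumpCov_mul_hessianMatrix
      ((hφ.fderiv_right (m := 2) (by norm_num)).differentiable (by norm_num) x)
      -- `η z i * η z j` is `(proj i).smulRight (proj j) (η z) (η z)` by definition
      fun i j => hηη ((EuclideanSpace.proj i).smulRight (EuclideanSpace.proj j)),
    ← integral_sub hΨ ((hηη D2).const_mul _), ← Real.norm_eq_abs]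
  calc _ ≤ B₃ * K ^ 3 * (c₃ * δ ^ (3 - σ)) :=
        norm_setIntegral_le_of_norm_le_mul_rpow volume hC.le hσ3 hδ0 hδ1 hdom (by positivity)
          hremainder
    _ ≤ (K ^ 3 * c₃ + 1) * B₃ * δ ^ (3 - σ) := by
        nlinarith [mul_nonneg hB₃0 (Real.rpow_nonneg hδ0.le (3 - σ))]

/-- the small-jump part of the nonlocal operator is approximated
by the local second-order operator `tr(a_δ D²φ)` with error `O(δ^(3-σ))‖D³φ‖_∞`. -/
theorem small_jump_second_order_approximation
    (M N : ℕ) (σ C K : ℝ) (hσ : σ ∈ Set.Ioo (0 : ℝ) 2) (hC : 0 < C) (hK : 0 < K)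
    (η : EuclideanSpace ℝ (Fin M) → EuclideanSpace ℝ (Fin N)) (hη : Measurable η)
    (hηK : ∀ z : EuclideanSpace ℝ (Fin M), ‖z‖ < 1 → ‖η z‖ ≤ K * ‖z‖)
    (ν : Measure (EuclideanSpace ℝ (Fin M))) (hν0 : ν {0} = 0)
    (k : EuclideanSpace ℝ (Fin M) → ℝ)
    (hνk : ∀ s : Set (EuclideanSpace ℝ (Fin M)), MeasurableSet s →
      s ⊆ {z | 0 < ‖z‖ ∧ ‖z‖ < 1} → ν s = ∫⁻ z in s, ENNReal.ofReal (k z) ∂volume)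
    (hk : ∀ z : EuclideanSpace ℝ (Fin M), 0 < ‖z‖ → ‖z‖ < 1 →
      0 ≤ k z ∧ k z ≤ C / ‖z‖ ^ ((M : ℝ) + σ)) :
    ∃ C' > (0 : ℝ), ∀ δ : ℝ, 0 < δ → δ < 1 →
      ∀ φ : EuclideanSpace ℝ (Fin N) → ℝ, ContDiff ℝ 3 φ →
      ∀ B₂ B₃ : ℝ, (∀ x, ‖iteratedFDeriv ℝ 2 φ x‖ ≤ B₂) →
        (∀ x, ‖iteratedFDeriv ℝ 3 φ x‖ ≤ B₃) →
      ∀ x : EuclideanSpace ℝ (Fin N),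
        |(∫ z in {z : EuclideanSpace ℝ (Fin M) | 0 < ‖z‖ ∧ ‖z‖ ≤ δ},
            (φ (x + η z) - φ x - fderiv ℝ φ x (η z)) ∂ν) -
          Matrix.trace (smallJumpCov M N η ν δ * hessianMatrix N φ x)| ≤
        C' * B₃ * δ ^ (3 - σ) :=
  small_jump_second_order_approximation_general M N σ C K hσ hC hK η hη hηK ν k hνk hk
end
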